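/- arXiv:1209.4116 — 2 statements merged into one kernel-verified Lean document; each statement's English description precedes it below -/
import Mathlib

section
/- Let Γ be a group acting by automorphisms α on an abelian group U of unitaries of an abelian von Neumann algebra Z, and let ω : Γ × Γ → U be a 2-cocycle, i.e. α_g(ω(h,k))·ω(gh,k)*·ω(g,hk)·ω(g,h)* = 1 for all g,h,k ∈ Γ. If sup_{g,h} ‖ω(g,h) − 1‖ < √2, then ψ := −i·log ω (defined via the principal branch of the logarithm, using continuous functional calculus) is a bounded 2-cocycle with values in the self-adjoint part of Z: sup_{g,h} ‖ψ(g,h)‖ < ∞ and α_g(ψ(h,k)) − ψ(gh,k) + ψ(g,hk) − ψ(g,h) = 0 for all g, h, k ∈ Γ. -/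
noncomputable section

/-! On the unit circle `-i log z = arg z`, so `ψ` is the functional calculus of `arg` at `ω`,
a self-adjoint element of norm at most `π`. A unitary within distance `√2` of `1` has its
spectrum in the open right half-plane, where `arg` is additive. The Gelfand transform is
injective, so the additive cocycle identity can be tested on characters `χ`; these commute with
the functional calculus, and `χ ∘ α g` is again a character, so applying `χ` to the
multiplicative cocycle identity and taking `arg` gives the additive one. -/

open Complex WeakDual
open scoped Real

namespace Complex

lemma arg_mul_of_re_pos {a b : ℂ} (ha : 0 < a.re) (hb : 0 < b.re) :
    arg (a * b) = arg a + arg b := by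
  have ha' := abs_lt.mp (abs_arg_lt_pi_div_two_iff.mpr (.inl ha))
  have hb' := abs_lt.mp (abs_arg_lt_pi_div_two_iff.mpr (.inl hb))
  exact (arg_mul_eq_add_arg_iff (ne_zero_of_re_pos ha) (ne_zero_of_re_pos hb)).mpr
    ⟨by linarith [Real.pi_pos], by linarith [Real.pi_pos]⟩

lemma arg_sub_arg_add_arg_sub_arg_eq_zero {a b c d : ℂ} (ha : 0 < a.re) (hb : 0 < b.re)
    (hc : 0 < c.re) (hd : 0 < d.re) (h : a * c = b * d) :
    arg a - arg b + arg c - arg d = 0 := by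
  have := congrArg arg h
  rw [arg_mul_of_re_pos ha hc, arg_mul_of_re_pos hb hd] at this
  linarith

lemma neg_I_mul_log_eq_arg {z : ℂ} (hz : ‖z‖ = 1) : -I * log z = arg z := by
  rw [log, hz, Real.log_one, ofReal_zero, zero_add, ← mul_assoc, mul_comm _ (arg z : ℂ),
    mul_assoc, neg_mul, I_mul_I]
  ring

end Complex

lemma mul_eq_mul_of_mul_star_mul_star_eq_one {M : Type*} [CommMonoid M] [StarMul M] {a b c d : M}
    (hb : b ∈ unitary M) (hd : d ∈ unitary M) (h : a * star b * c * star d = 1) :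
    a * c = b * d :=
  calc a * c = a * c * (star b * b) * (star d * d) := by
        rw [Unitary.star_mul_self_of_mem hb, Unitary.star_mul_self_of_mem hd, mul_one, mul_one]
    _ = a * star b * c * star d * (b * d) := by ac_rfl
    _ = b * d := by rw [h, one_mul]

namespace WeakDual.CharacterSpace

variable {𝕜 A B : Type*} [NontriviallyNormedField 𝕜] [NormedRing A] [CompleteSpace A]
  [NormedAlgebra 𝕜 A] [NormedRing B] [CompleteSpace B] [NormedAlgebra 𝕜 B]

def compAlgHom {F : Type*} [FunLike F A B] [AlgHomClass F 𝕜 A B] (φ : characterSpace 𝕜 B)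
    (f : F) : characterSpace 𝕜 A :=
  equivAlgHom.symm ((equivAlgHom φ).comp (AlgHomClass.toAlgHom f))

@[simp]
lemma compAlgHom_apply {F : Type*} [FunLike F A B] [AlgHomClass F 𝕜 A B]
    (φ : characterSpace 𝕜 B) (f : F) (a : A) :
    compAlgHom φ f a = φ (f a) :=
  rfl

end WeakDual.CharacterSpace

section CStarAlgebra

variable {A : Type*} [CStarAlgebra A]

lemma Unitary.re_pos_of_mem_spectrum {u : A} (hu : u ∈ unitary A) (h : ‖u - 1‖ < √2)
    {z : ℂ} (hz : z ∈ spectrum ℂ u) : 0 < z.re := by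
  have hsq : ‖u - 1‖ ^ 2 < 2 := by
    simpa using pow_lt_pow_left₀ h (norm_nonneg _) two_ne_zero
  linarith [Unitary.two_mul_one_sub_le_norm_sub_one_sq hu hz]

lemma Unitary.cfc_neg_I_mul_log_eq_cfc_arg {u : A} (hu : u ∈ unitary A) :
    cfc (fun z : ℂ => -I * log z) u = cfc (fun z : ℂ => (arg z : ℂ)) u :=
  cfc_congr fun _ hz => neg_I_mul_log_eq_arg (spectrum.norm_eq_one_of_unitary hu hz)

lemma WeakDual.CharacterSpace.apply_cfc_arg (φ : characterSpace ℂ A) {u : A}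
    (hu : u ∈ unitary A) (h : ‖u - 1‖ < 2) :
    φ (cfc (fun z : ℂ => (arg z : ℂ)) u) = arg (φ u) := by
  have : IsStarNormal u := isStarNormal_of_mem_unitary hu
  have hcont : ContinuousOn (fun z : ℂ => (arg z : ℂ)) (spectrum ℂ u) :=
    continuous_ofReal.comp_continuousOn <| continuousOn_arg.mono <|
      (Unitary.spectrum_subset_slitPlane_iff_norm_lt_two hu).mpr h
  rw [StarAlgHomClass.map_cfc (S := ℂ) φ _ u hcont (map_continuous φ),
    ← Algebra.algebraMap_self_apply (φ u), cfc_algebraMap]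
  rfl

end CStarAlgebra

lemma WeakDual.CharacterSpace.eq_zero_of_forall_apply_eq_zero {A : Type*} [CommCStarAlgebra A]
    {a : A} (h : ∀ φ : characterSpace ℂ A, φ a = 0) : a = 0 :=
  (gelfandTransform_isometry A).injective <| by
    ext φ
    simpa using h φ

theorem stmt_9_general {Γ : Type*} [Group Γ] {A : Type*} [CommCStarAlgebra A]
    (α : Γ →* (A ≃ₐ[ℂ] A))
    (ω : Γ → Γ → A) (hωu : ∀ g h, ω g h ∈ unitary A)
    (hcocycle : ∀ g h k,
      α g (ω h k) * star (ω (g * h) k) * ω g (h * k) * star (ω g h) = 1)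
    (hgap : ∃ s : ℝ, s < Real.sqrt 2 ∧ ∀ g h, ‖ω g h - 1‖ ≤ s) :
    ∀ ψ : Γ → Γ → A,
      (∀ g h, ψ g h = cfc (fun z : ℂ => -Complex.I * Complex.log z) (ω g h)) →
      (∀ g h, IsSelfAdjoint (ψ g h)) ∧
      (∃ C : ℝ, ∀ g h, ‖ψ g h‖ ≤ C) ∧
      (∀ g h k, α g (ψ h k) - ψ (g * h) k + ψ g (h * k) - ψ g h = 0) := by
  obtain ⟨s, hs, hωs⟩ := hgap
  have hω_lt : ∀ g h, ‖ω g h - 1‖ < √2 := fun g h => (hωs g h).trans_lt hs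
  have hω_lt_two : ∀ g h, ‖ω g h - 1‖ < 2 := fun g h =>
    (hω_lt g h).trans (by norm_num [Real.sqrt_lt'])
  intro ψ hψ
  have hψ_arg : ∀ g h, ψ g h = Unitary.argSelfAdjoint ⟨ω g h, hωu g h⟩ := fun g h =>
    (hψ g h).trans (Unitary.cfc_neg_I_mul_log_eq_cfc_arg (hωu g h))
  refine ⟨fun g h => hψ_arg g h ▸ (Unitary.argSelfAdjoint _).2,
    ⟨π, fun g h => hψ_arg g h ▸ Unitary.norm_argSelfAdjoint_le_pi _⟩, fun g h k => ?_⟩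
  refine CharacterSpace.eq_zero_of_forall_apply_eq_zero fun φ => ?_
  have hre : ∀ (χ : characterSpace ℂ A) a b, 0 < (χ (ω a b)).re := fun χ a b =>
    Unitary.re_pos_of_mem_spectrum (hωu a b) (hω_lt a b) (AlgHom.apply_mem_spectrum χ _)
  have hmul : φ (α g (ω h k)) * φ (ω g (h * k)) = φ (ω (g * h) k) * φ (ω g h) := by
    simpa only [map_mul] using congrArg φ <| mul_eq_mul_of_mul_star_mul_star_eq_one
      (hωu _ _) (hωu _ _) (hcocycle g h k)
  rw [map_sub, map_add, map_sub, ← CharacterSpace.compAlgHom_apply φ (α g)]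
  simp only [hψ_arg, Unitary.argSelfAdjoint_coe,
    CharacterSpace.apply_cfc_arg _ (hωu _ _) (hω_lt_two _ _), CharacterSpace.compAlgHom_apply]
  exact_mod_cast arg_sub_arg_add_arg_sub_arg_eq_zero (hre (CharacterSpace.compAlgHom φ (α g)) h k)
    (hre φ _ _) (hre φ _ _) (hre φ _ _) hmul

/-- taking logarithms of a uniformly close-to-1 unitary-valued 2-cocycle
`ω` on a group `Γ` with values in (the unitary group of) an abelian von Neumann algebra
`A` yields a bounded additive 2-cocycle `ψ = -i log ω` with self-adjoint values. -/
theorem stmt_9 {Γ : Type*} [Group Γ] {A : Type*} [CommCStarAlgebra A]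
    (α : Γ →* (A ≃ₐ[ℂ] A)) (hαstar : ∀ g x, α g (star x) = star (α g x))
    (ω : Γ → Γ → A) (hωu : ∀ g h, ω g h ∈ unitary A)
    (hcocycle : ∀ g h k,
      α g (ω h k) * star (ω (g * h) k) * ω g (h * k) * star (ω g h) = 1)
    (hgap : ∃ s : ℝ, s < Real.sqrt 2 ∧ ∀ g h, ‖ω g h - 1‖ ≤ s) :
    ∀ ψ : Γ → Γ → A,
      (∀ g h, ψ g h = cfc (fun z : ℂ => -Complex.I * Complex.log z) (ω g h)) →
      (∀ g h, IsSelfAdjoint (ψ g h)) ∧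
      (∃ C : ℝ, ∀ g h, ‖ψ g h‖ ≤ C) ∧
      (∀ g h k, α g (ψ h k) - ψ (g * h) k + ψ g (h * k) - ψ g h = 0) :=
  stmt_9_general α ω hωu hcocycle hgap
end
end

section
/- Let M ⊆ B(H) be a von Neumann algebra with a cyclic vector, and let δ : M → B(H) be a derivation. Then ‖δ‖_cb ≤ 2‖δ‖_row, where ‖δ‖_row = sup over n and over contractions r ∈ M_{1×n}(M) of ‖δ_{1×n}(r)‖. -/
noncomputable section

variable {H : Type*} [NormedAddCommGroup H] [InnerProductSpace ℂ H] [CompleteSpace H]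

/-- The amplification of an `n × n` matrix of operators on `H` to an operator on
`H ⊗ ℂⁿ = ℓ²(Fin n; H)`. -/
def amp {n : ℕ} (a : Matrix (Fin n) (Fin n) (H →L[ℂ] H)) :
    PiLp 2 (fun _ : Fin n => H) →L[ℂ] PiLp 2 (fun _ : Fin n => H) :=
  ((PiLp.continuousLinearEquiv 2 ℂ (fun _ : Fin n => H)).symm.toContinuousLinearMap) ∘L
    (ContinuousLinearMap.pi fun i => ∑ j, (a i j) ∘L (ContinuousLinearMap.proj j)) ∘L
    ((PiLp.continuousLinearEquiv 2 ℂ (fun _ : Fin n => H)).toContinuousLinearMap)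

/-- The row operator `ℓ²(Fin n; H) → H` associated to a `1 × n` row of operators. -/
def rowOp {n : ℕ} (r : Fin n → (H →L[ℂ] H)) : PiLp 2 (fun _ : Fin n => H) →L[ℂ] H :=
  (∑ j, (r j) ∘L (ContinuousLinearMap.proj j)) ∘L
    ((PiLp.continuousLinearEquiv 2 ℂ (fun _ : Fin n => H)).toContinuousLinearMap)

/-!
If `ξ` is a cyclic vector for `M`, every `u ∈ Hⁿ` is close to a column `(x_j ξ)_j` with
`x_j ∈ M`. Writing `T = (x_j)_j : H → Hⁿ` and `B = (T*T + t)^{-1/2} ∈ M`, the row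
`(T B)* = (B x_j*)_j` over `M` is a contraction with `‖(T B)* (T ξ)‖ ≥ ‖T ξ‖ - √t ‖ξ‖`
(a regularised polar decomposition of `T`). So `‖δ_n(a)‖` is the supremum of `‖r δ_n(a)‖` over
row contractions `r` over `M`, and the Leibniz rule `r δ_n(a) = δ_{1×n}(r a) - δ_{1×n}(r) a`
bounds each of these by `K ‖a‖ + K ‖a‖`.
-/

open ContinuousLinearMap

section RowsAndColumns

variable {E : Type*} [NormedAddCommGroup E] [InnerProductSpace ℂ E] {n : ℕ}

def colOp (x : Fin n → (E →L[ℂ] E)) : E →L[ℂ] PiLp 2 (fun _ : Fin n => E) :=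
  (PiLp.continuousLinearEquiv 2 ℂ (fun _ : Fin n => E)).symm.toContinuousLinearMap ∘L pi x

@[simp]
lemma rowOp_apply (r : Fin n → (E →L[ℂ] E)) (v : PiLp 2 (fun _ : Fin n => E)) :
    rowOp r v = ∑ j, r j (v j) := by
  simp [rowOp, sum_apply]

@[simp]
lemma colOp_apply (x : Fin n → (E →L[ℂ] E)) (v : E) (j : Fin n) : colOp x v j = x j v := rfl

@[simp]
lemma amp_apply (a : Matrix (Fin n) (Fin n) (E →L[ℂ] E)) (v : PiLp 2 (fun _ : Fin n => E))
    (i : Fin n) : amp a v i = ∑ j, a i j (v j) := by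
  simp [amp, sum_apply]

lemma rowOp_add (r s : Fin n → (E →L[ℂ] E)) : rowOp (r + s) = rowOp r + rowOp s := by
  ext v
  simp [Finset.sum_add_distrib]

lemma rowOp_smul (c : ℂ) (r : Fin n → (E →L[ℂ] E)) : rowOp (c • r) = c • rowOp r := by
  ext v
  simp [Finset.smul_sum]

lemma rowOp_toLp_single (r : Fin n → (E →L[ℂ] E)) (j : Fin n) (v : E) :
    rowOp r (WithLp.toLp 2 (Pi.single j v)) = r j v := by
  simp [apply_ite (r _)]

lemma rowOp_eq_zero_iff {r : Fin n → (E →L[ℂ] E)} : rowOp r = 0 ↔ r = 0 := by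
  refine ⟨fun h => funext fun j => ext fun v => ?_, fun h => by ext; simp [h]⟩
  simpa only [rowOp_toLp_single, Pi.zero_apply, zero_apply] using
    congr($h (WithLp.toLp 2 (Pi.single j v)))

@[simp]
lemma rowOp_zero : rowOp (0 : Fin n → (E →L[ℂ] E)) = 0 :=
  rowOp_eq_zero_iff.2 rfl

lemma comp_rowOp (b : E →L[ℂ] E) (r : Fin n → (E →L[ℂ] E)) :
    b ∘L rowOp r = rowOp fun j => b * r j := by
  ext v
  simp

lemma rowOp_comp_colOp (r x : Fin n → (E →L[ℂ] E)) :
    rowOp r ∘L colOp x = ∑ j, r j * x j := by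
  ext v
  simp [sum_apply]

lemma rowOp_comp_amp (r : Fin n → (E →L[ℂ] E)) (a : Matrix (Fin n) (Fin n) (E →L[ℂ] E)) :
    rowOp r ∘L amp a = rowOp (Matrix.vecMul r a) := by
  ext v
  simp only [comp_apply, rowOp_apply, amp_apply, map_sum, Matrix.vecMul, dotProduct, sum_apply]
  exact Finset.sum_comm

lemma adjoint_colOp [CompleteSpace E] (x : Fin n → (E →L[ℂ] E)) :
    adjoint (colOp x) = rowOp fun j => adjoint (x j) := by
  refine ((eq_adjoint_iff _ _).2 fun v w => ?_).symm
  simp [PiLp.inner_apply, sum_inner, adjoint_inner_left]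

end RowsAndColumns

lemma Matrix.vecMul_mem {R S m n : Type*} [NonUnitalNonAssocSemiring R] [SetLike S R]
    [NonUnitalSubsemiringClass S R] [Fintype m] {s : S} {r : m → R} (hr : ∀ j, r j ∈ s)
    {a : Matrix m n R} (ha : ∀ i j, a i j ∈ s) (k : n) : Matrix.vecMul r a k ∈ s :=
  sum_mem fun j _ => mul_mem (hr j) (ha j k)

section Regularization

open CFC RCLike
open scoped InnerProductSpace

variable {E F : Type*} [NormedAddCommGroup E] [InnerProductSpace ℂ E] [CompleteSpace E]
  [NormedAddCommGroup F] [InnerProductSpace ℂ F] [CompleteSpace F]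

lemma isStrictlyPositive_adjoint_comp_self_add (T : E →L[ℂ] F) {t : ℝ} (ht : 0 < t) :
    IsStrictlyPositive (adjoint T ∘L T + algebraMap ℝ (E →L[ℂ] E) t) :=
  (isStrictlyPositive_algebraMap ht).nonneg_add
    ((nonneg_iff_isPositive _).2 T.isPositive_adjoint_comp_self)

lemma norm_comp_rpow_neg_half_le_one (T : E →L[ℂ] F) {t : ℝ} (ht : 0 < t) :
    ‖T ∘L (adjoint T ∘L T + algebraMap ℝ (E →L[ℂ] E) t) ^ (-(1 / 2) : ℝ)‖ ≤ 1 := by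
  set X := adjoint T ∘L T
  set B := (X + algebraMap ℝ (E →L[ℂ] E) t) ^ (-(1 / 2) : ℝ)
  have hX : 0 ≤ X := (nonneg_iff_isPositive _).2 T.isPositive_adjoint_comp_self
  have hB : IsSelfAdjoint B := .of_nonneg rpow_nonneg
  have hBXB : adjoint (T ∘L B) ∘L (T ∘L B) = B * X * B := by
    rw [adjoint_comp, hB.adjoint_eq]
    rfl
  have hle : B * X * B ≤ 1 := by
    rw [← conjugate_rpow_neg_one_half _ (isStrictlyPositive_adjoint_comp_self_add T ht)]
    exact hB.conjugate_le_conjugate (le_add_of_nonneg_right (algebraMap_nonneg _ ht.le))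
  have hsq : ‖T ∘L B‖ * ‖T ∘L B‖ ≤ 1 := by
    rw [← norm_adjoint_comp_self, hBXB]
    exact (CStarAlgebra.norm_le_norm_of_nonneg_of_le (hB.conjugate_nonneg hX) hle).trans
      norm_id_le
  nlinarith [norm_nonneg (T ∘L B)]

lemma sub_le_of_sq_le_mul_sqrt {a b m : ℝ} (ha : 0 ≤ a) (hb : 0 ≤ b) (hm : 0 ≤ m)
    (h : a ^ 2 ≤ √(a ^ 2 + b ^ 2) * m) : a - b ≤ m := by
  rcases le_or_gt a b with hab | hab
  · linarith
  set c := √(a ^ 2 + b ^ 2)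
  have hca : a ≤ c := Real.le_sqrt_of_sq_le (by nlinarith)
  have hcb : c ≤ a + b := Real.sqrt_le_iff.2 ⟨by positivity, by nlinarith⟩
  have : (a - b) * c ≤ c * m := by
    nlinarith [mul_le_mul_of_nonneg_left hcb (sub_nonneg.2 hab.le)]
  nlinarith

lemma norm_apply_sub_le_norm_adjoint_comp_rpow_neg_half (T : E →L[ℂ] F) {t : ℝ} (ht : 0 < t)
    (ξ : E) :
    ‖T ξ‖ - √t * ‖ξ‖ ≤
      ‖adjoint (T ∘L (adjoint T ∘L T + algebraMap ℝ (E →L[ℂ] E) t) ^ (-(1 / 2) : ℝ)) (T ξ)‖ := by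
  set X := adjoint T ∘L T
  set A := X + algebraMap ℝ (E →L[ℂ] E) t
  have hA : IsStrictlyPositive A := isStrictlyPositive_adjoint_comp_self_add T ht
  set B := A ^ (-(1 / 2) : ℝ)
  set C := A ^ (1 / 2 : ℝ)
  have hB : IsSelfAdjoint B := .of_nonneg rpow_nonneg
  have hC : IsSelfAdjoint C := .of_nonneg rpow_nonneg
  have hCB : C * B = 1 := rpow_mul_rpow_neg _ hA
  have hCC : C * C = A := by
    rw [← rpow_add hA.isUnit]
    norm_num
    exact rpow_one A hA.nonneg
  have hy : adjoint (T ∘L B) (T ξ) = B (X ξ) := by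
    rw [adjoint_comp, hB.adjoint_eq]
    rfl
  have hinner : re ⟪C ξ, adjoint (T ∘L B) (T ξ)⟫_ℂ = ‖T ξ‖ ^ 2 := by
    rw [hy, ← hC.adjoint_eq, adjoint_inner_left]
    change re ⟪ξ, (C * B * X) ξ⟫_ℂ = _
    rw [hCB, one_mul, apply_norm_sq_eq_inner_adjoint_right]
  have hCξ : ‖C ξ‖ ^ 2 = ‖T ξ‖ ^ 2 + (√t * ‖ξ‖) ^ 2 := by
    rw [apply_norm_sq_eq_inner_adjoint_right, hC.adjoint_eq, ← mul_def, hCC,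
      apply_norm_sq_eq_inner_adjoint_right T, mul_pow, Real.sq_sqrt ht.le]
    simp [A, X, inner_add_right, Algebra.algebraMap_eq_smul_one, inner_smul_right_eq_smul,
      ← Complex.ofReal_pow]
  refine sub_le_of_sq_le_mul_sqrt (norm_nonneg _) (by positivity) (norm_nonneg _) ?_
  rw [← hCξ, Real.sqrt_sq (norm_nonneg _), ← hinner]
  exact re_inner_le_norm _ _

end Regularization

namespace VonNeumannAlgebra

variable (M : VonNeumannAlgebra H)

def HasCyclicVector : Prop := ∃ ξ : H, Dense {y : H | ∃ x ∈ M, x ξ = y}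

def IsRowContraction {n : ℕ} (r : Fin n → (H →L[ℂ] H)) : Prop :=
  (∀ j, r j ∈ M) ∧ ‖rowOp r‖ ≤ 1

lemma isRowContraction_zero {n : ℕ} : M.IsRowContraction (0 : Fin n → (H →L[ℂ] H)) :=
  ⟨fun _ => zero_mem M, by rw [rowOp_zero, opNorm_zero]; exact zero_le_one⟩

lemma rpow_mem {a : H →L[ℂ] H} (ha : a ∈ M) (y : ℝ) : a ^ y ∈ M := by
  rw [← SetLike.mem_coe, ← M.centralizer_centralizer]
  exact fun b hb => (Commute.cfc_nnreal (hb a ha) _).eq.symm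

lemma dense_colOp_apply {ξ : H} (hξ : Dense {y : H | ∃ x ∈ M, x ξ = y}) (n : ℕ) :
    Dense {v : PiLp 2 (fun _ : Fin n => H) |
      ∃ x : Fin n → (H →L[ℂ] H), (∀ j, x j ∈ M) ∧ colOp x ξ = v} := by
  let e := (PiLp.homeomorph 2 (fun _ : Fin n => H)).symm
  refine (e.surjective.denseRange.dense_image e.continuous
    (dense_pi Set.univ fun _ _ => hξ)).mono ?_
  rintro _ ⟨v, hv, rfl⟩
  choose x hxM hx using fun j => hv j (Set.mem_univ j)
  exact ⟨x, hxM, by ext j; exact hx j⟩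

lemma adjoint_colOp_comp_colOp_mem {n : ℕ} {x : Fin n → (H →L[ℂ] H)} (hx : ∀ j, x j ∈ M) :
    adjoint (colOp x) ∘L colOp x ∈ M := by
  rw [adjoint_colOp, rowOp_comp_colOp]
  exact sum_mem fun j _ => mul_mem (star_mem (hx j)) (hx j)

open CFC in
lemma exists_isRowContraction_sub_le_norm_rowOp_apply (hM : M.HasCyclicVector) {n : ℕ}
    (u : PiLp 2 (fun _ : Fin n => H)) {ε : ℝ} (hε : 0 < ε) :
    ∃ r, M.IsRowContraction r ∧ ‖u‖ - ε ≤ ‖rowOp r u‖ := by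
  obtain ⟨ξ, hξ⟩ := hM
  obtain ⟨_, ⟨x, hxM, rfl⟩, hux⟩ :=
    (M.dense_colOp_apply hξ n).exists_dist_lt u (by positivity : 0 < ε / 3)
  set T := colOp x
  set t := (ε / 3 / (‖ξ‖ + 1)) ^ 2
  have ht : 0 < t := by positivity
  set B := (adjoint T ∘L T + algebraMap ℝ (H →L[ℂ] H) t) ^ (-(1 / 2) : ℝ)
  have hB : IsSelfAdjoint B := .of_nonneg rpow_nonneg
  have hBM : B ∈ M := M.rpow_mem
    (add_mem (M.adjoint_colOp_comp_colOp_mem hxM) (M.toStarSubalgebra.algebraMap_mem (t : ℂ))) _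
  have hr : rowOp (fun j => B * adjoint (x j)) = adjoint (T ∘L B) := by
    rw [adjoint_comp, hB.adjoint_eq, adjoint_colOp, comp_rowOp]
  have hR : ‖adjoint (T ∘L B)‖ ≤ 1 := by
    rw [adjoint.norm_map]
    exact norm_comp_rpow_neg_half_le_one T ht
  refine ⟨fun j => B * adjoint (x j), ⟨fun j => mul_mem hBM (star_mem (hxM j)), hr ▸ hR⟩, ?_⟩
  have hξt : √t * ‖ξ‖ ≤ ε / 3 := by
    rw [Real.sqrt_sq (by positivity), div_mul_eq_mul_div]
    exact div_le_of_le_mul₀ (by positivity) (by positivity) (by nlinarith)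
  rw [dist_eq_norm] at hux
  have hTξ : ‖adjoint (T ∘L B) (T ξ)‖ ≤ ‖adjoint (T ∘L B) u‖ + ‖u - T ξ‖ := by
    calc ‖adjoint (T ∘L B) (T ξ)‖
        ≤ ‖adjoint (T ∘L B) u‖ + ‖adjoint (T ∘L B) (u - T ξ)‖ := by
          rw [map_sub]; exact norm_le_insert _ _
      _ ≤ ‖adjoint (T ∘L B) u‖ + ‖u - T ξ‖ := by
          gcongr
          exact (le_opNorm _ _).trans (mul_le_of_le_one_left (norm_nonneg _) hR)
  rw [hr]
  linarith [norm_apply_sub_le_norm_adjoint_comp_rpow_neg_half T ht ξ, norm_le_insert' u (T ξ)]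

lemma opNorm_le_of_forall_isRowContraction (hM : M.HasCyclicVector) {F : Type*}
    [NormedAddCommGroup F] [NormedSpace ℂ F] {n : ℕ} {T : F →L[ℂ] PiLp 2 (fun _ : Fin n => H)}
    {c : ℝ} (h : ∀ r, M.IsRowContraction r → ‖rowOp r ∘L T‖ ≤ c) : ‖T‖ ≤ c := by
  have hc : 0 ≤ c := (norm_nonneg _).trans (h 0 M.isRowContraction_zero)
  refine opNorm_le_bound _ hc fun v => le_of_forall_pos_le_add fun ε hε => ?_
  obtain ⟨r, hr, hle⟩ := M.exists_isRowContraction_sub_le_norm_rowOp_apply hM (T v) hε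
  have := (le_opNorm (rowOp r ∘L T) v).trans
    (mul_le_mul_of_nonneg_right (h r hr) (norm_nonneg v))
  rw [comp_apply] at this
  linarith

end VonNeumannAlgebra

section Derivation

variable {M : VonNeumannAlgebra H} {δ : (H →L[ℂ] H) →ₗ[ℂ] (H →L[ℂ] H)} {K : ℝ}

lemma map_vecMul_of_leibniz (hLeib : ∀ x ∈ M, ∀ y ∈ M, δ (x * y) = δ x * y + x * δ y) {n : ℕ}
    {r : Fin n → (H →L[ℂ] H)} (hr : ∀ j, r j ∈ M) {a : Matrix (Fin n) (Fin n) (H →L[ℂ] H)}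
    (ha : ∀ i j, a i j ∈ M) :
    (fun k => δ (Matrix.vecMul r a k)) =
      Matrix.vecMul (fun j => δ (r j)) a + Matrix.vecMul r (a.map fun x => δ x) := by
  ext1 k
  simp [Matrix.vecMul, dotProduct, hLeib _ (hr _) _ (ha _ k), Finset.sum_add_distrib]

lemma norm_rowOp_map_le
    (hrow : ∀ n (r : Fin n → (H →L[ℂ] H)), M.IsRowContraction r →
      ‖rowOp (fun j => δ (r j))‖ ≤ K)
    {n : ℕ} {s : Fin n → (H →L[ℂ] H)} (hs : ∀ j, s j ∈ M) :
    ‖rowOp (fun j => δ (s j))‖ ≤ K * ‖rowOp s‖ := by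
  rcases (norm_nonneg (rowOp s)).eq_or_lt with h | h
  · obtain rfl : s = 0 := rowOp_eq_zero_iff.1 (opNorm_zero_iff _ |>.1 h.symm)
    simp [← Pi.zero_def, opNorm_zero]
  set c := ‖rowOp s‖
  have hc : ‖(c : ℂ)‖ = c := Complex.norm_of_nonneg h.le
  have hsc : M.IsRowContraction (((c : ℂ)⁻¹) • s) := by
    refine ⟨fun j => M.toStarSubalgebra.smul_mem (hs j) _, ?_⟩
    rw [rowOp_smul]
    refine (opNorm_smul_le _ _).trans ?_
    rw [norm_inv, hc, inv_mul_cancel₀ h.ne']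
  have hδ : rowOp (fun j => δ ((((c : ℂ)⁻¹) • s) j)) =
      ((c : ℂ)⁻¹) • rowOp fun j => δ (s j) := by
    rw [← rowOp_smul]
    congr 1
    ext1 j
    simp
  calc ‖rowOp (fun j => δ (s j))‖
      = ‖(c : ℂ) • ((c : ℂ)⁻¹ • rowOp fun j => δ (s j))‖ := by
        rw [smul_smul, mul_inv_cancel₀ (by exact_mod_cast h.ne'), one_smul]
    _ ≤ c * K := by
        refine (opNorm_smul_le _ _).trans ?_
        rw [hc, ← hδ]
        exact mul_le_mul_of_nonneg_left (hrow n _ hsc) h.le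
    _ = K * c := mul_comm _ _

lemma norm_rowOp_comp_amp_map_le (hLeib : ∀ x ∈ M, ∀ y ∈ M, δ (x * y) = δ x * y + x * δ y)
    (hrow : ∀ n (r : Fin n → (H →L[ℂ] H)), M.IsRowContraction r →
      ‖rowOp (fun j => δ (r j))‖ ≤ K)
    {n : ℕ} {r : Fin n → (H →L[ℂ] H)} (hr : M.IsRowContraction r)
    {a : Matrix (Fin n) (Fin n) (H →L[ℂ] H)} (ha : ∀ i j, a i j ∈ M) :
    ‖rowOp r ∘L amp (a.map fun x => δ x)‖ ≤ 2 * K * ‖amp a‖ := by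
  have hK : 0 ≤ K := (opNorm_nonneg _).trans (hrow n r hr)
  have hleib : rowOp r ∘L amp (a.map fun x => δ x) =
      rowOp (fun k => δ (Matrix.vecMul r a k)) - rowOp (fun j => δ (r j)) ∘L amp a := by
    rw [rowOp_comp_amp, rowOp_comp_amp, map_vecMul_of_leibniz hLeib hr.1 ha, rowOp_add,
      add_sub_cancel_left]
  have hra : ‖rowOp (Matrix.vecMul r a)‖ ≤ ‖amp a‖ := by
    rw [← rowOp_comp_amp]
    exact (opNorm_comp_le _ _).trans (mul_le_of_le_one_left (norm_nonneg _) hr.2)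
  calc ‖rowOp r ∘L amp (a.map fun x => δ x)‖
      ≤ ‖rowOp (fun k => δ (Matrix.vecMul r a k))‖ + ‖rowOp (fun j => δ (r j)) ∘L amp a‖ := by
        rw [hleib]
        exact norm_sub_le (rowOp fun k => δ (Matrix.vecMul r a k)) _
    _ ≤ K * ‖amp a‖ + K * ‖amp a‖ := by
        gcongr
        · exact (norm_rowOp_map_le hrow (Matrix.vecMul_mem hr.1 ha)).trans (by gcongr)
        · exact (opNorm_comp_le _ _).trans (by gcongr; exact hrow n r hr)
    _ = 2 * K * ‖amp a‖ := by ring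

end Derivation

/-- for a von Neumann algebra `M` with a cyclic vector and a derivation
`δ : M → B(H)`, one has `‖δ‖_cb ≤ 2‖δ‖_row`: if `K` bounds the row norm, i.e.
`‖δ_{1×n}(r)‖ ≤ K` for every row contraction `r` over `M`, then `‖δ_n(a)‖ ≤ 2K‖a‖`
for every matrix `a` over `M`. -/
theorem stmt_12 (M : VonNeumannAlgebra H)
    (hcyc : ∃ ξ : H, Dense {y : H | ∃ x ∈ M, x ξ = y})
    (δ : (H →L[ℂ] H) →ₗ[ℂ] (H →L[ℂ] H))
    (hLeib : ∀ x ∈ M, ∀ y ∈ M, δ (x * y) = δ x * y + x * δ y)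
    (K : ℝ)
    (hrow : ∀ (n : ℕ) (r : Fin n → (H →L[ℂ] H)), (∀ j, r j ∈ M) → ‖rowOp r‖ ≤ 1 →
      ‖rowOp (fun j => δ (r j))‖ ≤ K) :
    ∀ (n : ℕ) (a : Matrix (Fin n) (Fin n) (H →L[ℂ] H)), (∀ i j, a i j ∈ M) →
      ‖amp (a.map fun x => δ x)‖ ≤ 2 * K * ‖amp a‖ := by
  intro n a ha
  exact M.opNorm_le_of_forall_isRowContraction hcyc fun r hr =>
    norm_rowOp_comp_amp_map_le hLeib (fun n r hr => hrow n r hr.1 hr.2) hr ha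
end
end
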